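/- If M₁ and M₂ are maximal matchings of a simple graph G and G[M₁ △ M₂] contains an M₂-augmenting path component P = (v₁,…,v_ℓ) (both endpoints unmatched in M₂) with edges e_i = {v_i, v_{i+1}} and e₁, e₃ ∈ M₁, e₂ ∈ M₂, then M̂ = (M₁ \ {e₁, e₃}) ∪ {e₂} is a matching of G with |M̂| = |M₁| − 1 and |M̂ ∩ M₂| > |M₁ ∩ M₂|. -/

import Mathlib

open SimpleGraph

variable {V : Type*}

def IsMatchingF (G : SimpleGraph V) (M : Finset (Sym2 V)) : Prop :=
  (∀ e ∈ M, e ∈ G.edgeSet) ∧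
    ∀ e ∈ M, ∀ f ∈ M, e ≠ f → ∀ v : V, v ∈ e → v ∉ f

def IsMaximalMatchingF [DecidableEq V] (G : SimpleGraph V) (M : Finset (Sym2 V)) : Prop :=
  IsMatchingF G M ∧ ∀ e ∈ G.edgeSet, e ∉ M → ¬ IsMatchingF G (insert e M)

/-- `v` is unmatched by the matching `M`. -/
def Unmatched (M : Finset (Sym2 V)) (v : V) : Prop := ∀ e ∈ M, v ∉ e

/-- The graph `G[M₁ △ M₂]` on the symmetric difference of two edge sets. -/
def sdGraph [DecidableEq V] (M₁ M₂ : Finset (Sym2 V)) : SimpleGraph V where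
  Adj v w := v ≠ w ∧ s(v, w) ∈ (M₁ \ M₂) ∪ (M₂ \ M₁)
  symm := by
    constructor
    intro v w h
    exact ⟨h.1.symm, by rw [Sym2.eq_swap]; exact h.2⟩
  loopless := ⟨fun v h => h.1 rfl⟩

/-- The walk `p` is a path which is exactly a connected component of `H`
(it spans the component and uses all of its edges, and has at least one edge). -/
def IsPathComponent [DecidableEq V] (H : SimpleGraph V) {u w : V} (p : H.Walk u w) : Prop :=
  p.IsPath ∧ 1 ≤ p.length ∧
    (∀ x : V, x ∈ p.support ↔ H.connectedComponentMk x = H.connectedComponentMk u) ∧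
    (∀ a b : V, H.Adj a b → a ∈ p.support → s(a, b) ∈ p.edges)

/-- The closed walk `p` is a cycle which is exactly a connected component of `H`. -/
def IsCycleComponent [DecidableEq V] (H : SimpleGraph V) {u : V} (p : H.Walk u u) : Prop :=
  p.IsCycle ∧
    (∀ x : V, x ∈ p.support ↔ H.connectedComponentMk x = H.connectedComponentMk u) ∧
    (∀ a b : V, H.Adj a b → a ∈ p.support → s(a, b) ∈ p.edges)

/-! The edge `e₂ ∈ M₂ \ M₁` joins an endpoint of `e₁` to an endpoint of `e₃`, two distinct (hence
vertex-disjoint) edges of `M₁ \ M₂`. Swapping `e₁, e₃` for `e₂` therefore keeps `M₁` a matching,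
loses one edge, and gains the common edge `e₂`. -/

lemma mem_left_iff_notMem_right_of_mem_edgeSet_sdGraph [DecidableEq V]
    {M₁ M₂ : Finset (Sym2 V)} {e : Sym2 V} (he : e ∈ (sdGraph M₁ M₂).edgeSet) :
    e ∈ M₁ ↔ e ∉ M₂ := by
  induction e using Sym2.ind with
  | _ a b =>
    have hsd := (show (sdGraph M₁ M₂).Adj a b from he).2
    simp only [Finset.mem_union, Finset.mem_sdiff] at hsd
    tauto

namespace IsMatchingF

variable {G : SimpleGraph V} {M : Finset (Sym2 V)}

lemma mono {N : Finset (Sym2 V)} (hM : IsMatchingF G M) (hNM : N ⊆ M) : IsMatchingF G N :=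
  ⟨fun e he => hM.1 e (hNM he), fun e he f hf => hM.2 e (hNM he) f (hNM hf)⟩

lemma insert [DecidableEq V] {e : Sym2 V} (hM : IsMatchingF G M) (he : e ∈ G.edgeSet)
    (hdisj : ∀ f ∈ M, ∀ v ∈ e, v ∉ f) : IsMatchingF G (insert e M) := by
  refine ⟨fun f hf => ?_, fun f hf g hg hfg v hvf => ?_⟩
  · rcases Finset.mem_insert.1 hf with rfl | hf
    exacts [he, hM.1 f hf]
  rcases Finset.mem_insert.1 hf with rfl | hfM <;> rcases Finset.mem_insert.1 hg with rfl | hgM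
  · exact absurd rfl hfg
  · exact hdisj g hgM v hvf
  · exact fun hvg => hdisj f hfM v hvg hvf
  · exact hM.2 f hfM g hgM hfg v hvf

lemma insert_erase_erase [DecidableEq V] {e₁ e₂ e₃ : Sym2 V} {x y : V} (hM : IsMatchingF G M)
    (he₁ : e₁ ∈ M) (he₃ : e₃ ∈ M) (he₂ : e₂ ∈ G.edgeSet) (hne : e₁ ≠ e₃)
    (hx : x ∈ e₁ ∧ x ∈ e₂) (hy : y ∈ e₂ ∧ y ∈ e₃) :
    IsMatchingF G (Insert.insert e₂ ((M.erase e₁).erase e₃)) := by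
  have hxy : x ≠ y := by
    rintro rfl
    exact hM.2 e₁ he₁ e₃ he₃ hne x hx.1 hy.2
  have he₂_eq : e₂ = s(x, y) := (Sym2.mem_and_mem_iff hxy).1 ⟨hx.2, hy.1⟩
  refine (hM.mono (Finset.erase_subset _ _ |>.trans (Finset.erase_subset _ _))).insert he₂ ?_
  intro f hf v hv
  obtain ⟨hfe₃, hfe₁, hfM⟩ : f ≠ e₃ ∧ f ≠ e₁ ∧ f ∈ M := by simpa using hf
  rcases Sym2.mem_iff.1 (he₂_eq ▸ hv) with rfl | rfl
  · exact hM.2 e₁ he₁ f hfM hfe₁.symm v hx.1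
  · exact hM.2 e₃ he₃ f hfM hfe₃.symm v hy.2

end IsMatchingF

namespace Finset

variable {α : Type*} [DecidableEq α]

lemma card_insert_erase_erase {s : Finset α} {a b c : α} (ha : a ∉ s) (hb : b ∈ s) (hc : c ∈ s)
    (hbc : b ≠ c) : #(insert a ((s.erase b).erase c)) = #s - 1 := by
  have h2 : 2 ≤ #s := one_lt_card.2 ⟨b, hb, c, hc, hbc⟩
  rw [card_insert_of_notMem fun h => ha (mem_of_mem_erase (mem_of_mem_erase h)),
    card_erase_of_mem (mem_erase.2 ⟨hbc.symm, hc⟩), card_erase_of_mem hb]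
  omega

lemma insert_erase_erase_inter {s t : Finset α} {a b c : α} (ha : a ∈ t) (hb : b ∉ t)
    (hc : c ∉ t) : insert a ((s.erase b).erase c) ∩ t = insert a (s ∩ t) := by
  rw [insert_inter_of_mem ha]
  ext x
  simp only [mem_insert, mem_inter, mem_erase]
  constructor
  · rintro (rfl | ⟨⟨-, -, hs⟩, ht⟩) <;> tauto
  · rintro (rfl | ⟨hs, ht⟩)
    · exact Or.inl rfl
    · exact Or.inr ⟨⟨fun h => hc (h ▸ ht), fun h => hb (h ▸ ht), hs⟩, ht⟩

end Finset

theorem stmt6 [DecidableEq V] (G : SimpleGraph V) (M₁ M₂ : Finset (Sym2 V))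
    (h₁ : IsMaximalMatchingF G M₁) (h₂ : IsMaximalMatchingF G M₂)
    (u w : V) (p : (sdGraph M₁ M₂).Walk u w)
    (e₁ e₂ e₃ : Sym2 V)
    (he₁ : e₁ ∈ p.edges ∧ e₁ ∈ M₁ ∧ u ∈ e₁)
    (he₂ : e₂ ∈ p.edges ∧ e₂ ∈ M₂) (he₃ : e₃ ∈ p.edges ∧ e₃ ∈ M₁)
    (hne : e₁ ≠ e₃)
    (h12 : ∃ x : V, x ∈ e₁ ∧ x ∈ e₂) (h23 : ∃ x : V, x ∈ e₂ ∧ x ∈ e₃) :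
    IsMatchingF G (insert e₂ ((M₁.erase e₁).erase e₃)) ∧
      (insert e₂ ((M₁.erase e₁).erase e₃)).card = M₁.card - 1 ∧
      (M₁ ∩ M₂).card < ((insert e₂ ((M₁.erase e₁).erase e₃)) ∩ M₂).card := by
  have hsd : ∀ e ∈ p.edges, e ∈ M₁ ↔ e ∉ M₂ := fun e he =>
    mem_left_iff_notMem_right_of_mem_edgeSet_sdGraph (p.edges_subset_edgeSet he)
  have he₂M₁ : e₂ ∉ M₁ := fun h => (hsd e₂ he₂.1).1 h he₂.2
  obtain ⟨x, hx⟩ := h12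
  obtain ⟨y, hy⟩ := h23
  refine ⟨h₁.1.insert_erase_erase he₁.2.1 he₃.2 (h₂.1.1 e₂ he₂.2) hne hx hy,
    Finset.card_insert_erase_erase he₂M₁ he₁.2.1 he₃.2 hne, ?_⟩
  rw [Finset.insert_erase_erase_inter he₂.2 ((hsd e₁ he₁.1).1 he₁.2.1) ((hsd e₃ he₃.1).1 he₃.2),
    Finset.card_insert_of_notMem fun h => he₂M₁ (Finset.mem_inter.1 h).1]
  exact Nat.lt_succ_self _
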